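/- Let H be an N × M complex matrix with λ := λ_max(Hᴴ H) > 0, let β > 0, P_FA ∈ (0, e^{−2}), and define f : [0,∞) → ℝ by f(P) = exp(ln(P_FA)/(1 + βλP)); let P_t > 0 be the unique positive real with f(P_t) − f(0) = f′(P_t)·P_t and set λ_t := (f(P_t) − f(0))/P_t. Consider Borel probability measures μ on the space of M × M positive semidefinite Hermitian complex matrices, and define the expected detection probability of μ as ∫ exp(ln(P_FA)/(1 + β·Tr(H R Hᴴ))) dμ(R). Then for every power budget P ≥ 0, the supremum of the expected detection probability over all such μ satisfying ∫ Tr(R) dμ(R) ≤ P equals f(0) + λ_t·P if P ≤ P_t, and equals f(P) if P ≥ P_t. -/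

import Mathlib

open MeasureTheory Matrix
open scoped ComplexOrder

/-- The product (pi) measurable structure on matrices, entrywise. -/
instance matrixMeasurableSpace {m n α : Type*} [MeasurableSpace α] :
    MeasurableSpace (Matrix m n α) :=
  (inferInstance : MeasurableSpace (m → n → α))

instance matrixMeasurableSingletonClass {m n α : Type*} [Countable m] [Countable n]
    [MeasurableSpace α] [MeasurableSingletonClass α] :
    MeasurableSingletonClass (Matrix m n α) :=
  (inferInstance : MeasurableSingletonClass (m → n → α))

/-! ### Calculus lemmas -/

noncomputable def FF (L c x : ℝ) : ℝ := Real.exp (L / (1 + c * x))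
noncomputable def FD (L c x : ℝ) : ℝ := Real.exp (L / (1 + c * x)) * (-(L * c) / (1 + c * x) ^ 2)
noncomputable def SD (L c x : ℝ) : ℝ :=
  Real.exp (L / (1 + c * x)) * ((L * c / (1 + c * x) ^ 2) ^ 2 + 2 * L * c ^ 2 / (1 + c * x) ^ 3)

lemma hasDerivAt_inner {L c x : ℝ} (h : 1 + c * x ≠ 0) :
    HasDerivAt (fun y => L / (1 + c * y)) (-(L * c) / (1 + c * x) ^ 2) x := by
  have hu : HasDerivAt (fun y : ℝ => 1 + c * y) c x := by
    simpa using ((hasDerivAt_id x).const_mul c).const_add 1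
  have := (hasDerivAt_const x L).div hu h
  exact this.congr_deriv (by ring)

lemma hasDerivAt_FF {L c x : ℝ} (h : 1 + c * x ≠ 0) :
    HasDerivAt (FF L c) (FD L c x) x := by
  have := (hasDerivAt_inner (L := L) h).exp
  rw [show FF L c = fun y => Real.exp (L / (1 + c * y)) from rfl]
  simpa [FF, FD, mul_comm] using this

lemma hasDerivAt_FD {L c x : ℝ} (h : 1 + c * x ≠ 0) :
    HasDerivAt (FD L c) (SD L c x) x := by
  have hu : HasDerivAt (fun y : ℝ => 1 + c * y) c x := by
    simpa using ((hasDerivAt_id x).const_mul c).const_add 1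
  have hu2 : HasDerivAt (fun y : ℝ => (1 + c * y) ^ 2) (2 * (1 + c * x) * c) x := by
    simpa [pow_one] using hu.fun_pow 2
  have hq : HasDerivAt (fun y : ℝ => -(L * c) / (1 + c * y) ^ 2)
      ((0 * (1 + c * x) ^ 2 - -(L * c) * (2 * (1 + c * x) * c)) / ((1 + c * x) ^ 2) ^ 2) x :=
    (hasDerivAt_const x (-(L * c))).div hu2 (pow_ne_zero 2 h)
  have hexp : HasDerivAt (fun y => Real.exp (L / (1 + c * y)))
      (Real.exp (L / (1 + c * x)) * (-(L * c) / (1 + c * x) ^ 2)) x := by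
    simpa [mul_comm] using (hasDerivAt_inner (L := L) h).exp
  have := hexp.mul hq
  refine this.congr_deriv ?_
  unfold SD
  field_simp
  ring

lemma FD_pos {L c x : ℝ} (hL : L < 0) (hc : 0 < c) (hx : 0 ≤ x) : 0 < FD L c x := by
  have hu : 0 < 1 + c * x := by positivity
  have : 0 < -(L * c) := by nlinarith
  unfold FD
  positivity

section CalcPart
variable {L c : ℝ} (hL : L < -2) (hc : 0 < c)

include hc in
lemma upos {x : ℝ} (hx : 0 ≤ x) : 0 < 1 + c * x := by positivity

include hL hc

lemma xs_pos : 0 < (-L / 2 - 1) / c := by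
  apply div_pos _ hc; linarith

lemma SD_pos {x : ℝ} (hx : 0 < x) (hxs : x < (-L / 2 - 1) / c) : 0 < SD L c x := by
  have hu : 0 < 1 + c * x := by positivity
  have h2 : 1 + c * x < -L / 2 := by
    have := (lt_div_iff₀ hc).mp hxs
    nlinarith
  have key : 0 < (L * c / (1 + c * x) ^ 2) ^ 2 + 2 * L * c ^ 2 / (1 + c * x) ^ 3 := by
    have e : (L * c / (1 + c * x) ^ 2) ^ 2 + 2 * L * c ^ 2 / (1 + c * x) ^ 3
        = (L * c ^ 2) * (L + 2 * (1 + c * x)) / (1 + c * x) ^ 4 := by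
      field_simp
    rw [e]
    apply div_pos _ (by positivity)
    have hLneg : L < 0 := by linarith
    have h3 : L + 2 * (1 + c * x) < 0 := by linarith
    have h4 : L * c ^ 2 < 0 := mul_neg_of_neg_of_pos hLneg (by positivity)
    exact mul_pos_of_neg_of_neg h4 h3
  unfold SD; positivity

lemma SD_nonpos {x : ℝ} (hx : 0 ≤ x) (hxs : (-L / 2 - 1) / c ≤ x) : SD L c x ≤ 0 := by
  have hu : 0 < 1 + c * x := by positivity
  have h2 : -L / 2 ≤ 1 + c * x := by
    have := (div_le_iff₀ hc).mp hxs
    nlinarith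
  have key : (L * c / (1 + c * x) ^ 2) ^ 2 + 2 * L * c ^ 2 / (1 + c * x) ^ 3 ≤ 0 := by
    have e : (L * c / (1 + c * x) ^ 2) ^ 2 + 2 * L * c ^ 2 / (1 + c * x) ^ 3
        = (L * c ^ 2) * (L + 2 * (1 + c * x)) / (1 + c * x) ^ 4 := by
      field_simp
    rw [e]
    apply div_nonpos_of_nonpos_of_nonneg _ (by positivity)
    have hLneg : L < 0 := by linarith
    have h3 : 0 ≤ L + 2 * (1 + c * x) := by linarith
    have h4 : L * c ^ 2 ≤ 0 := (mul_neg_of_neg_of_pos hLneg (by positivity)).le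
    exact mul_nonpos_of_nonpos_of_nonneg h4 h3
  unfold SD
  exact mul_nonpos_of_nonneg_of_nonpos (Real.exp_pos _).le key

lemma concave_right : ConcaveOn ℝ (Set.Ici ((-L / 2 - 1) / c)) (FF L c) := by
  have hxs := xs_pos hL hc
  apply concaveOn_of_hasDerivWithinAt2_nonpos (convex_Ici _) (f' := FD L c) (f'' := SD L c)
  · intro x hx
    exact (hasDerivAt_FF (ne_of_gt (upos hc (le_of_lt (lt_of_lt_of_le hxs hx))))).continuousAt.continuousWithinAt
  · intro x hx
    rw [interior_Ici] at hx
    exact (hasDerivAt_FF (ne_of_gt (upos hc (le_of_lt (hxs.trans hx))))).hasDerivWithinAt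
  · intro x hx
    rw [interior_Ici] at hx
    exact (hasDerivAt_FD (ne_of_gt (upos hc (le_of_lt (hxs.trans hx))))).hasDerivWithinAt
  · intro x hx
    rw [interior_Ici] at hx
    exact SD_nonpos hL hc (le_of_lt (hxs.trans hx)) hx.le

lemma convex_left : ConvexOn ℝ (Set.Icc 0 ((-L / 2 - 1) / c)) (FF L c) := by
  apply convexOn_of_hasDerivWithinAt2_nonneg (convex_Icc _ _) (f' := FD L c) (f'' := SD L c)
  · intro x hx
    exact (hasDerivAt_FF (ne_of_gt (upos hc hx.1))).continuousAt.continuousWithinAt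
  · intro x hx
    rw [interior_Icc] at hx
    exact (hasDerivAt_FF (ne_of_gt (upos hc hx.1.le))).hasDerivWithinAt
  · intro x hx
    rw [interior_Icc] at hx
    exact (hasDerivAt_FD (ne_of_gt (upos hc hx.1.le))).hasDerivWithinAt
  · intro x hx
    rw [interior_Icc] at hx
    exact (SD_pos hL hc hx.1 hx.2).le

lemma FD_anti : AntitoneOn (FD L c) (Set.Ici ((-L / 2 - 1) / c)) := by
  have hxs := xs_pos hL hc
  apply antitoneOn_of_deriv_nonpos (convex_Ici _)
  · intro x hx
    exact (hasDerivAt_FD (ne_of_gt (upos hc (hxs.le.trans hx)))).continuousAt.continuousWithinAt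
  · intro x hx
    rw [interior_Ici] at hx
    exact (hasDerivAt_FD (ne_of_gt (upos hc (hxs.trans hx).le))).differentiableAt.differentiableWithinAt
  · intro x hx
    rw [interior_Ici] at hx
    rw [(hasDerivAt_FD (ne_of_gt (upos hc (hxs.trans hx).le))).deriv]
    exact SD_nonpos hL hc (hxs.trans hx).le hx.le

lemma tangent_right {b z : ℝ} (hb : (-L / 2 - 1) / c ≤ b) (hz : (-L / 2 - 1) / c ≤ z) :
    FF L c z ≤ FF L c b + FD L c b * (z - b) := by
  have hcon := concave_right hL hc
  have hdb : HasDerivAt (FF L c) (FD L c b) b :=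
    hasDerivAt_FF (ne_of_gt (upos hc ((xs_pos hL hc).le.trans hb)))
  rcases lt_trichotomy z b with h | h | h
  · have := hcon.le_slope_of_hasDerivAt hz hb h hdb
    rw [slope_def_field] at this
    rw [le_div_iff₀ (by linarith : (0:ℝ) < b - z)] at this
    nlinarith
  · subst h; simp
  · have := hcon.slope_le_of_hasDerivAt hb hz h hdb
    rw [slope_def_field] at this
    rw [div_le_iff₀ (by linarith)] at this
    nlinarith

lemma xs_lt_Pt {Pt : ℝ} (hPt : 0 < Pt)
    (ht : FF L c Pt - FF L c 0 = FD L c Pt * Pt) : (-L / 2 - 1) / c < Pt := by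
  set xs := (-L / 2 - 1) / c with hxs_def
  by_contra hcon
  push_neg at hcon
  have hxs := xs_pos hL hc
  set φ : ℝ → ℝ := fun y => FF L c y - FF L c 0 - FD L c y * y with hφ
  have hder : ∀ y ∈ Set.Icc (0:ℝ) xs, HasDerivAt φ (-(y * SD L c y)) y := by
    intro y hy
    have hu := ne_of_gt (upos hc hy.1)
    have h1 := ((hasDerivAt_FF (L := L) hu).sub_const (FF L c 0)).sub
      ((hasDerivAt_FD (L := L) hu).mul (hasDerivAt_id y))
    refine h1.congr_deriv ?_
    simp only [id_eq]
    ring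
  have hanti : StrictAntiOn φ (Set.Icc (0:ℝ) xs) := by
    apply strictAntiOn_of_deriv_neg (convex_Icc _ _)
    · exact fun y hy => (hder y hy).continuousAt.continuousWithinAt
    · intro y hy
      rw [interior_Icc] at hy
      rw [(hder y (Set.Ioo_subset_Icc_self hy)).deriv]
      have := SD_pos hL hc hy.1 hy.2
      nlinarith [mul_pos hy.1 this]
  have h0 : φ 0 = 0 := by simp [hφ]
  have hPtmem : Pt ∈ Set.Icc (0:ℝ) xs := ⟨hPt.le, hcon⟩
  have h0mem : (0:ℝ) ∈ Set.Icc (0:ℝ) xs := ⟨le_refl _, hxs.le⟩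
  have hlt := hanti h0mem hPtmem hPt
  rw [h0] at hlt
  have heq : φ Pt = 0 := by rw [hφ]; simp only; linarith [ht]
  linarith

theorem main_tangent {Pt : ℝ} (hPt : 0 < Pt)
    (ht : FF L c Pt - FF L c 0 = FD L c Pt * Pt)
    {a : ℝ} (ha : Pt ≤ a) {x : ℝ} (hx : 0 ≤ x) :
    FF L c x ≤ FF L c a + FD L c a * (x - a) := by
  set xs := (-L / 2 - 1) / c with hxs_def
  have hxs := xs_pos hL hc
  have hxsPt : xs < Pt := xs_lt_Pt hL hc hPt ht
  have haxs : xs ≤ a := (hxsPt.trans_le ha).le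
  rcases le_or_gt xs x with hxbig | hxsmall
  · exact tangent_right hL hc haxs hxbig
  · have hFxs_le : FF L c xs ≤ FF L c 0 + FD L c Pt * xs := by
      have := tangent_right hL hc hxsPt.le (le_refl xs)
      nlinarith [this]
    have hcvx := convex_left hL hc
    have hs0 : (0:ℝ) ≤ 1 - x / xs := by
      have : x / xs ≤ 1 := (div_le_one hxs).mpr hxsmall.le
      linarith
    have hs1 : (0:ℝ) ≤ x / xs := div_nonneg hx hxs.le
    have hchord : FF L c x ≤ (1 - x / xs) * FF L c 0 + (x / xs) * FF L c xs := by
      have := hcvx.2 (Set.mem_Icc.mpr ⟨le_refl 0, hxs.le⟩)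
        (Set.mem_Icc.mpr ⟨hxs.le, le_refl xs⟩) hs0 hs1 (by ring)
      have harg : (1 - x / xs) • (0:ℝ) + (x / xs) • xs = x := by
        rw [smul_eq_mul, smul_eq_mul, mul_zero, zero_add, div_mul_cancel₀ x (ne_of_gt hxs : xs ≠ 0)]
      rw [harg] at this
      simpa [smul_eq_mul] using this
    have hellx : FF L c x ≤ FF L c 0 + FD L c Pt * x := by
      have hxsne : xs ≠ 0 := ne_of_gt hxs
      have : (1 - x / xs) * FF L c 0 + (x / xs) * (FF L c 0 + FD L c Pt * xs)
          = FF L c 0 + FD L c Pt * x := by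
        field_simp
        ring
      nlinarith [hchord, hFxs_le, hs1]
    have hFDle : FD L c a ≤ FD L c Pt :=
      FD_anti hL hc (Set.mem_Ici.mpr hxsPt.le) (Set.mem_Ici.mpr haxs) ha
    have htPt : FF L c Pt ≤ FF L c a + FD L c a * (Pt - a) :=
      tangent_right hL hc haxs hxsPt.le
    have hxPt : x ≤ Pt := hxsmall.le.trans hxsPt.le
    nlinarith [ht, htPt, hFDle, hellx]

end CalcPart

/-! ### Matrix lemmas -/

section MatrixPart
variable {n : Type*} [Fintype n] [DecidableEq n]

omit [DecidableEq n] in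
lemma trace_psd_re_nonneg {S : Matrix n n ℂ} (hS : S.PosSemidef) : 0 ≤ S.trace.re := by
  classical
  have hdiag : ∀ i, 0 ≤ (S i i).re := by
    intro i
    have := hS.re_dotProduct_nonneg (Pi.single i 1)
    simpa [dotProduct, Matrix.mulVec, Pi.single_apply, Finset.sum_ite_eq', RCLike.re_to_complex]
      using this
  rw [Matrix.trace]
  simp only [Complex.re_sum, Matrix.diag]
  exact Finset.sum_nonneg fun i _ => hdiag i

omit [DecidableEq n] in
open scoped MatrixOrder in
lemma trace_mul_psd_re_nonneg {S R : Matrix n n ℂ} (hS : S.PosSemidef) (hR : R.PosSemidef) :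
    0 ≤ (S * R).trace.re := by
  classical
  set B := CFC.sqrt R with hB
  have hBB : B * B = R := CFC.sqrt_mul_sqrt_self R hR.nonneg
  have hherm : Bᴴ = B := (CFC.sqrt_nonneg R).posSemidef.isHermitian
  have hcyc : (S * R).trace = (B * S * B).trace := by
    rw [← hBB, ← mul_assoc, Matrix.trace_mul_cycle]
  have hpsd : (Bᴴ * S * B).PosSemidef := hS.conjTranspose_mul_mul_same B
  rw [hherm] at hpsd
  rw [hcyc]
  exact trace_psd_re_nonneg (by rwa [])

lemma psd_shift {A : Matrix n n ℂ} (hA : A.IsHermitian) {lam : ℝ}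
    (hmax : ∀ i, hA.eigenvalues i ≤ lam) : (((lam : ℂ) • 1 - A)).PosSemidef := by
  set V : Matrix n n ℂ := (hA.eigenvectorUnitary : Matrix n n ℂ) with hV
  have hVV : V * star V = 1 := Matrix.mem_unitaryGroup_iff.mp hA.eigenvectorUnitary.2
  have hspec : A = V * Matrix.diagonal (RCLike.ofReal ∘ hA.eigenvalues) * star V :=
    hA.spectral_theorem
  have hdiag : V * Matrix.diagonal (fun i => ((lam - hA.eigenvalues i : ℝ) : ℂ)) * star V
      = ((lam : ℂ) • 1 - A) := by
    have h1 : (lam : ℂ) • (1 : Matrix n n ℂ) = V * ((lam : ℂ) • 1) * star V := by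
      rw [Matrix.mul_smul, Matrix.smul_mul, Matrix.mul_one, hVV]
    have h2 : (Matrix.diagonal (fun i => ((lam - hA.eigenvalues i : ℝ) : ℂ)))
        = (lam : ℂ) • 1 - Matrix.diagonal (RCLike.ofReal ∘ hA.eigenvalues) := by
      rw [Matrix.smul_one_eq_diagonal, Matrix.diagonal_sub]
      congr 1
      funext i
      simp [Complex.ofReal_sub]
    rw [h2, Matrix.mul_sub, Matrix.sub_mul, ← h1, ← hspec]
  rw [← hdiag]
  have hd : (Matrix.diagonal (fun i => ((lam - hA.eigenvalues i : ℝ) : ℂ))).PosSemidef := by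
    apply Matrix.PosSemidef.diagonal
    rw [Pi.le_def]
    intro i
    simp only [Pi.zero_apply]
    rw [Complex.zero_le_real]
    linarith [hmax i]
  have := hd.mul_mul_conjTranspose_same V
  simpa [Matrix.star_eq_conjTranspose] using this

lemma key_bound {N : Type*} [Fintype N] (H : Matrix N n ℂ) {lam : ℝ}
    (hmax : ∀ i, (Matrix.isHermitian_conjTranspose_mul_self H).eigenvalues i ≤ lam)
    {R : Matrix n n ℂ} (hR : R.PosSemidef) :
    (H * R * Hᴴ).trace.re ≤ lam * R.trace.re := by
  have hshift := psd_shift (Matrix.isHermitian_conjTranspose_mul_self H) hmax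
  have h0 := trace_mul_psd_re_nonneg hshift hR
  have hexp : ((lam : ℂ) • 1 - Hᴴ * H) * R = (lam : ℂ) • R - Hᴴ * H * R := by
    rw [Matrix.sub_mul, Matrix.smul_mul, Matrix.one_mul]
  rw [hexp, Matrix.trace_sub, Matrix.trace_smul] at h0
  have hcyc : (H * R * Hᴴ).trace = (Hᴴ * H * R).trace := Matrix.trace_mul_cycle H R Hᴴ
  rw [hcyc]
  have hre : ((lam : ℂ) • R.trace).re = lam * R.trace.re := by
    simp [Complex.smul_re]
  simp only [Complex.sub_re, hre] at h0
  linarith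

omit [DecidableEq n] in
lemma trace_conj_psd_re_nonneg {N : Type*} [Fintype N] (H : Matrix N n ℂ)
    {R : Matrix n n ℂ} (hR : R.PosSemidef) : 0 ≤ (H * R * Hᴴ).trace.re :=
  trace_psd_re_nonneg (hR.mul_mul_conjTranspose_same H)

noncomputable def Rone (v : n → ℂ) (s : ℝ) : Matrix n n ℂ :=
  Matrix.of fun i j => (s : ℂ) * (v i * star (v j))

omit [DecidableEq n] in
lemma Rone_psd (v : n → ℂ) {s : ℝ} (hs : 0 ≤ s) : (Rone v s).PosSemidef := by
  have : Rone v s = (Matrix.of fun i (_ : Fin 1) => ((Real.sqrt s : ℝ) : ℂ) * v i) *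
      (Matrix.of fun i (_ : Fin 1) => ((Real.sqrt s : ℝ) : ℂ) * v i)ᴴ := by
    ext i j
    simp [Rone, Matrix.mul_apply, Matrix.conjTranspose_apply, Fin.sum_univ_one,
      Complex.conj_ofReal]
    have hss : ((Real.sqrt s : ℝ) : ℂ) * ((Real.sqrt s : ℝ) : ℂ) = (s : ℂ) := by
      rw [← Complex.ofReal_mul, Real.mul_self_sqrt hs]
    rw [← hss]
    ring
  rw [this]
  exact Matrix.posSemidef_self_mul_conjTranspose _

omit [DecidableEq n] in
lemma Rone_trace (v : n → ℂ) (hv : ∑ i, star (v i) * v i = (1 : ℂ)) (s : ℝ) :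
    (Rone v s).trace = (s : ℂ) := by
  rw [Matrix.trace]
  simp only [Matrix.diag, Rone, Matrix.of_apply]
  rw [← Finset.mul_sum]
  rw [show ∑ i, v i * star (v i) = ∑ i, star (v i) * v i from Finset.sum_congr rfl
    fun i _ => mul_comm _ _, hv, mul_one]

omit [DecidableEq n] in
lemma Rone_quad {A : Matrix n n ℂ} {v : n → ℂ} {lam : ℝ}
    (hAv : A.mulVec v = lam • v) (hv : ∑ i, star (v i) * v i = (1 : ℂ)) (s : ℝ) :
    (A * Rone v s).trace = ((s * lam : ℝ) : ℂ) := by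
  rw [Matrix.trace]
  simp only [Matrix.diag, Matrix.mul_apply, Rone, Matrix.of_apply]
  have hrow : ∀ i : n, ∑ j, A i j * ((s:ℂ) * (v j * star (v i)))
      = (s:ℂ) * star (v i) * ((lam:ℝ) : ℂ) * v i := by
    intro i
    have h1 : ∑ j, A i j * ((s:ℂ) * (v j * star (v i)))
        = (s:ℂ) * star (v i) * ∑ j, A i j * v j := by
      rw [Finset.mul_sum]
      exact Finset.sum_congr rfl fun j _ => by ring
    have h2 : ∑ j, A i j * v j = ((lam:ℝ):ℂ) * v i := by
      have := congrFun hAv i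
      simpa [Matrix.mulVec, dotProduct, Pi.smul_apply, Complex.real_smul] using this
    rw [h1, h2]
    ring
  rw [Finset.sum_congr rfl fun i _ => hrow i]
  have hfin : ∑ i, (s:ℂ) * star (v i) * ((lam:ℝ):ℂ) * v i
      = (s:ℂ) * ((lam:ℝ):ℂ) * ∑ i, star (v i) * v i := by
    rw [Finset.mul_sum]
    exact Finset.sum_congr rfl fun i _ => by ring
  rw [hfin, hv, mul_one]
  push_cast
  ring

lemma unit_sum_of_basis {A : Matrix n n ℂ} (hA : A.IsHermitian) (i₀ : n) :
    ∑ i, star ((hA.eigenvectorBasis i₀ : EuclideanSpace ℂ n) i) *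
      ((hA.eigenvectorBasis i₀ : EuclideanSpace ℂ n) i) = (1 : ℂ) := by
  have horth := hA.eigenvectorBasis.orthonormal
  have h := orthonormal_iff_ite.mp horth i₀ i₀
  simp only [if_true, eq_self_iff_true] at h
  rw [← h]
  rw [PiLp.inner_apply]
  simp [mul_comm, Complex.mul_conj, Complex.normSq_eq_norm_sq]

end MatrixPart

/-! ### Measurability -/

section MeasPart
variable {M N : ℕ}

lemma meas_entry (i j : Fin M) : Measurable (fun R : Matrix (Fin M) (Fin M) ℂ => R i j) :=
  (measurable_pi_apply j).comp (measurable_pi_apply i)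

lemma meas_tr : Measurable (fun R : Matrix (Fin M) (Fin M) ℂ => R.trace.re) := by
  apply Complex.measurable_re.comp
  show Measurable fun R : Matrix (Fin M) (Fin M) ℂ => ∑ i, R i i
  exact Finset.measurable_sum _ fun i _ => meas_entry i i

lemma meas_T (H : Matrix (Fin N) (Fin M) ℂ) :
    Measurable (fun R : Matrix (Fin M) (Fin M) ℂ => (H * R * Hᴴ).trace.re) := by
  apply Complex.measurable_re.comp
  show Measurable fun R : Matrix (Fin M) (Fin M) ℂ => ∑ i, (H * R * Hᴴ) i i
  apply Finset.measurable_sum _ fun i _ => ?_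
  simp only [Matrix.mul_apply]
  apply Finset.measurable_sum _ fun k _ => ?_
  apply Measurable.mul_const
  apply Finset.measurable_sum _ fun l _ => ?_
  exact (meas_entry l k).const_mul _

lemma meas_g (H : Matrix (Fin N) (Fin M) ℂ) (L b : ℝ) :
    Measurable (fun R : Matrix (Fin M) (Fin M) ℂ =>
      Real.exp (L / (1 + b * (H * R * Hᴴ).trace.re))) := by
  apply Real.measurable_exp.comp
  exact Measurable.div measurable_const (((meas_T H).const_mul b).const_add 1)

lemma integrable_dirac' {f : Matrix (Fin M) (Fin M) ℂ → ℝ} (hf : Measurable f)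
    (a : Matrix (Fin M) (Fin M) ℂ) : Integrable f (Measure.dirac a) := by
  constructor
  · exact hf.aestronglyMeasurable
  · rw [HasFiniteIntegral, lintegral_dirac]
    exact ENNReal.coe_lt_top

end MeasPart

theorem stmt17 {N M : ℕ} (hM : 0 < M) (H : Matrix (Fin N) (Fin M) ℂ)
    (lam : ℝ)
    (hlam : lam = ⨆ i : Fin M, (Matrix.isHermitian_conjTranspose_mul_self H).eigenvalues i)
    (hlampos : 0 < lam)
    (β PFA : ℝ) (hβ : 0 < β) (hPFA0 : 0 < PFA) (hPFA1 : PFA < Real.exp (-2))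
    (f : ℝ → ℝ) (hf : f = fun P : ℝ => Real.exp (Real.log PFA / (1 + β * lam * P)))
    (Pt : ℝ) (hPt : 0 < Pt) (htangent : f Pt - f 0 = deriv f Pt * Pt)
    (hPtuniq : ∀ Q : ℝ, 0 < Q → f Q - f 0 = deriv f Q * Q → Q = Pt)
    (lamt : ℝ) (hlamt : lamt = (f Pt - f 0) / Pt)
    (P : ℝ) (hP : 0 ≤ P) :
    (P ≤ Pt →
      sSup {r : ℝ | ∃ μ : Measure (Matrix (Fin M) (Fin M) ℂ), IsProbabilityMeasure μ ∧
          (∀ᵐ R ∂μ, R.PosSemidef) ∧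
          Integrable (fun R : Matrix (Fin M) (Fin M) ℂ => R.trace.re) μ ∧
          (∫ R, R.trace.re ∂μ) ≤ P ∧
          r = ∫ R, Real.exp (Real.log PFA / (1 + β * ((H * R * Hᴴ).trace.re))) ∂μ}
        = f 0 + lamt * P) ∧
    (Pt ≤ P →
      sSup {r : ℝ | ∃ μ : Measure (Matrix (Fin M) (Fin M) ℂ), IsProbabilityMeasure μ ∧
          (∀ᵐ R ∂μ, R.PosSemidef) ∧
          Integrable (fun R : Matrix (Fin M) (Fin M) ℂ => R.trace.re) μ ∧
          (∫ R, R.trace.re ∂μ) ≤ P ∧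
          r = ∫ R, Real.exp (Real.log PFA / (1 + β * ((H * R * Hᴴ).trace.re))) ∂μ}
        = f P) := by
  -- setup
  set L : ℝ := Real.log PFA with hLdef
  set c : ℝ := β * lam with hcdef
  have hL : L < -2 := by
    have := Real.log_lt_log hPFA0 hPFA1
    rwa [Real.log_exp] at this
  have hL0 : L < 0 := by linarith
  have hc : 0 < c := mul_pos hβ hlampos
  have hfFF : f = FF L c := by
    funext x
    rw [hf]
    simp only [FF, hcdef]
  have hderiv : deriv f Pt = FD L c Pt := by
    rw [hfFF]
    exact (hasDerivAt_FF (ne_of_gt (upos hc hPt.le))).deriv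
  have ht : FF L c Pt - FF L c 0 = FD L c Pt * Pt := by
    rw [← hfFF]
    rw [htangent, hderiv]
  have hlamt_eq : lamt = FD L c Pt := by
    rw [hlamt, hfFF, ht]
    field_simp
  -- eigenvector data
  set hA := Matrix.isHermitian_conjTranspose_mul_self H with hAdef
  haveI : Nonempty (Fin M) := ⟨⟨0, hM⟩⟩
  obtain ⟨i₀, hi₀⟩ : ∃ i₀ : Fin M, ∀ i, hA.eigenvalues i ≤ hA.eigenvalues i₀ :=
    Finite.exists_max hA.eigenvalues
  have hlam_eq : lam = hA.eigenvalues i₀ := by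
    rw [hlam]
    exact le_antisymm (ciSup_le hi₀)
      (le_ciSup (Set.Finite.bddAbove (Set.finite_range _)) i₀)
  have hmax : ∀ i, hA.eigenvalues i ≤ lam := fun i => hlam_eq ▸ hi₀ i
  set v : Fin M → ℂ := fun i => (hA.eigenvectorBasis i₀ : EuclideanSpace ℂ (Fin M)) i with hvdef
  have hv : ∑ i, star (v i) * v i = (1 : ℂ) := unit_sum_of_basis hA i₀
  have hAv : (Hᴴ * H).mulVec v = lam • v := by
    have h := hA.mulVec_eigenvectorBasis i₀
    rw [hlam_eq]
    exact h
  -- the integrand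
  set g : Matrix (Fin M) (Fin M) ℂ → ℝ :=
    fun R => Real.exp (Real.log PFA / (1 + β * ((H * R * Hᴴ).trace.re))) with hgdef
  have hgmeas : Measurable g := meas_g H (Real.log PFA) β
  -- values of g on rank-one matrices
  have hgRone : ∀ s : ℝ, g (Rone v s) = f s := by
    intro s
    have hq : (Hᴴ * H * Rone v s).trace = ((s * lam : ℝ) : ℂ) := Rone_quad hAv hv s
    have hcyc : (H * Rone v s * Hᴴ).trace = (Hᴴ * H * Rone v s).trace :=
      Matrix.trace_mul_cycle H (Rone v s) Hᴴ
    rw [hgdef]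
    simp only
    rw [hcyc, hq, hf]
    simp only [Complex.ofReal_re]
    congr 2
    ring
  have htrRone : ∀ s : ℝ, (Rone v s).trace.re = s := by
    intro s
    rw [Rone_trace v hv s, Complex.ofReal_re]
  -- pointwise bound
  have hptwise : ∀ a : ℝ, Pt ≤ a → ∀ R : Matrix (Fin M) (Fin M) ℂ, R.PosSemidef →
      g R ≤ (FF L c a - FD L c a * a) + FD L c a * R.trace.re := by
    intro a ha R hR
    have htr0 : 0 ≤ R.trace.re := trace_psd_re_nonneg hR
    have hT0 : 0 ≤ (H * R * Hᴴ).trace.re := trace_conj_psd_re_nonneg H hR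
    have hTle : (H * R * Hᴴ).trace.re ≤ lam * R.trace.re := key_bound H hmax hR
    have h1 : g R ≤ FF L c (R.trace.re) := by
      rw [hgdef]
      simp only [FF]
      apply Real.exp_le_exp.mpr
      have hd1 : (0:ℝ) < 1 + β * (H * R * Hᴴ).trace.re := by positivity
      have hd2 : (0:ℝ) < 1 + c * R.trace.re := by positivity
      rw [div_le_div_iff₀ hd1 hd2]
      have hden : 1 + β * (H * R * Hᴴ).trace.re ≤ 1 + c * R.trace.re := by
        rw [hcdef]
        nlinarith
      nlinarith [mul_le_mul_of_nonpos_left hden hL0.le]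
    have h2 : FF L c (R.trace.re) ≤ FF L c a + FD L c a * (R.trace.re - a) :=
      main_tangent hL hc hPt ht ha htr0
    linarith
  -- integral upper bound over the feasible set
  have hub : ∀ a : ℝ, Pt ≤ a → ∀ r : ℝ,
      (∃ μ : Measure (Matrix (Fin M) (Fin M) ℂ), IsProbabilityMeasure μ ∧
          (∀ᵐ R ∂μ, R.PosSemidef) ∧
          Integrable (fun R : Matrix (Fin M) (Fin M) ℂ => R.trace.re) μ ∧
          (∫ R, R.trace.re ∂μ) ≤ P ∧
          r = ∫ R, Real.exp (Real.log PFA / (1 + β * ((H * R * Hᴴ).trace.re))) ∂μ) →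
      r ≤ FF L c a + FD L c a * (P - a) := by
    rintro a ha r ⟨μ, hprob, hae, hint, htrP, rfl⟩
    have ha0 : (0:ℝ) ≤ a := (hPt.trans_le ha).le
    have hgint : Integrable g μ := by
      apply Integrable.mono' (integrable_const 1) hgmeas.aestronglyMeasurable
      filter_upwards [hae] with R hR
      rw [Real.norm_eq_abs, abs_of_pos (Real.exp_pos _)]
      apply Real.exp_le_one_iff.mpr
      have hT0 : 0 ≤ (H * R * Hᴴ).trace.re := trace_conj_psd_re_nonneg H hR
      have : (0:ℝ) < 1 + β * (H * R * Hᴴ).trace.re := by positivity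
      exact div_nonpos_of_nonpos_of_nonneg hL0.le this.le
    have haff : Integrable
        (fun R : Matrix (Fin M) (Fin M) ℂ =>
          (FF L c a - FD L c a * a) + FD L c a * R.trace.re) μ :=
      (integrable_const _).add (hint.const_mul _)
    have hmono : (∫ R, g R ∂μ) ≤
        ∫ R, ((FF L c a - FD L c a * a) + FD L c a * R.trace.re) ∂μ := by
      apply integral_mono_ae hgint haff
      filter_upwards [hae] with R hR
      exact hptwise a ha R hR
    rw [integral_add (integrable_const _) (hint.const_mul _), integral_const,
      integral_const_mul] at hmono
    simp only [measure_univ, probReal_univ, ENNReal.toReal_one, smul_eq_mul, one_mul] at hmono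
    have hFDnn : 0 ≤ FD L c a := (FD_pos hL0 hc ha0).le
    have := mul_le_mul_of_nonneg_left htrP hFDnn
    calc (∫ R, g R ∂μ) ≤ (FF L c a - FD L c a * a) + FD L c a * ∫ R, R.trace.re ∂μ := hmono
      _ ≤ (FF L c a - FD L c a * a) + FD L c a * P := by linarith
      _ = FF L c a + FD L c a * (P - a) := by ring
  constructor
  · -- case P ≤ Pt
    intro hPPt
    apply IsGreatest.csSup_eq
    constructor
    · -- membership: two-point mixture
      set θ : ℝ := P / Pt with hθdef
      have hθ0 : 0 ≤ θ := div_nonneg hP hPt.le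
      have hθ1 : θ ≤ 1 := (div_le_one hPt).mpr hPPt
      refine ⟨(ENNReal.ofReal (1 - θ)) • Measure.dirac (0 : Matrix (Fin M) (Fin M) ℂ)
        + (ENNReal.ofReal θ) • Measure.dirac (Rone v Pt), ?_, ?_, ?_, ?_, ?_⟩
      · constructor
        simp only [Measure.add_toOuterMeasure, Measure.coe_add, Pi.add_apply,
          Measure.smul_toOuterMeasure, Measure.coe_smul, Pi.smul_apply, smul_eq_mul,
          measure_univ, mul_one]
        rw [← ENNReal.ofReal_add (by linarith) hθ0]
        norm_num
      · rw [ae_add_measure_iff]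
        constructor
        · exact Measure.ae_smul_measure
            (by rw [ae_dirac_eq]; exact Filter.eventually_pure.mpr (Matrix.PosSemidef.zero)) _
        · exact Measure.ae_smul_measure
            (by rw [ae_dirac_eq]; exact Filter.eventually_pure.mpr (Rone_psd v hPt.le)) _
      · exact Integrable.add_measure
          ((integrable_dirac' meas_tr _).smul_measure ENNReal.ofReal_ne_top)
          ((integrable_dirac' meas_tr _).smul_measure ENNReal.ofReal_ne_top)
      · rw [integral_add_measure
            ((integrable_dirac' meas_tr _).smul_measure ENNReal.ofReal_ne_top)
            ((integrable_dirac' meas_tr _).smul_measure ENNReal.ofReal_ne_top),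
          integral_smul_measure, integral_smul_measure, integral_dirac, integral_dirac,
          ENNReal.toReal_ofReal (by linarith), ENNReal.toReal_ofReal hθ0]
        rw [htrRone Pt]
        simp only [Matrix.trace_zero, Complex.zero_re, smul_eq_mul, mul_zero, zero_add]
        rw [hθdef]
        field_simp
        exact le_rfl
      · rw [integral_add_measure
            ((integrable_dirac' hgmeas _).smul_measure ENNReal.ofReal_ne_top)
            ((integrable_dirac' hgmeas _).smul_measure ENNReal.ofReal_ne_top),
          integral_smul_measure, integral_smul_measure, integral_dirac, integral_dirac,
          ENNReal.toReal_ofReal (by linarith), ENNReal.toReal_ofReal hθ0]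
        have hg0 : g 0 = f 0 := by
          have h00 : (0 : Matrix (Fin M) (Fin M) ℂ) = Rone v 0 := by
            ext i j
            simp [Rone]
          rw [h00, hgRone]
        rw [hg0, hgRone Pt]
        simp only [smul_eq_mul]
        rw [hlamt, hθdef]
        field_simp
        ring
    · -- upper bound
      intro r hr
      have := hub Pt le_rfl r hr
      have heq : FF L c Pt + FD L c Pt * (P - Pt) = f 0 + lamt * P := by
        rw [hfFF, hlamt_eq]
        linear_combination ht
      linarith
  · -- case Pt ≤ P
    intro hPtP
    apply IsGreatest.csSup_eq
    constructor
    · -- membership: dirac at Rone v P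
      refine ⟨Measure.dirac (Rone v P), ?_, ?_, ?_, ?_, ?_⟩
      · infer_instance
      · rw [ae_dirac_eq]
        exact Filter.eventually_pure.mpr (Rone_psd v hP)
      · exact integrable_dirac' meas_tr _
      · rw [integral_dirac, htrRone P]
      · rw [integral_dirac]
        exact (hgRone P).symm
    · intro r hr
      have := hub P hPtP r hr
      have heq : FF L c P + FD L c P * (P - P) = f P := by
        rw [hfFF]; ring
      linarith
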